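/- Let F be a field, G a finite group, V a G-module, and U a G-submodule of V. Then topdeg F[U]_G ≤ topdeg F[V]_G and dim_F F[U]_G ≤ dim_F F[V]_G. -/

import Mathlib

open MvPolynomial

variable {F G ι : Type*} [Field F] [Group G] [Fintype ι] [DecidableEq ι]

/-- The (left) action of a group element `σ` on the polynomial algebra
`F[V] = S(V^*)` presented as `MvPolynomial ι F`, for a matrix representation
`ρ : G →* GL(ι, F)` of `G` on `V = (ι → F)`.  It is given by `σ • f = f ∘ σ⁻¹`,
i.e. by linear substitution of the variables using the matrix of `ρ σ⁻¹`. -/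
noncomputable def polyAct (ρ : G →* (Matrix ι ι F)ˣ) (σ : G)
    (f : MvPolynomial ι F) : MvPolynomial ι F :=
  MvPolynomial.aeval
    (fun i => ∑ j, ((ρ σ⁻¹ : Matrix ι ι F) i j) • (MvPolynomial.X j : MvPolynomial ι F)) f

/-- A polynomial is invariant if it is fixed by the action of every group element. -/
def IsInv (ρ : G →* (Matrix ι ι F)ˣ) (f : MvPolynomial ι F) : Prop :=
  ∀ σ : G, polyAct ρ σ f = f

/-- The Hilbert ideal: the ideal of `F[V]` generated by the homogeneous invariants
of positive degree. -/
noncomputable def hilbertIdeal (ρ : G →* (Matrix ι ι F)ˣ) : Ideal (MvPolynomial ι F) :=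
  Ideal.span {f : MvPolynomial ι F | (∃ d, 0 < d ∧ f.IsHomogeneous d) ∧ IsInv ρ f}

/-- The top degree of the coinvariant algebra `F[V]_G = F[V]/(Hilbert ideal)`:
the largest degree `d` such that the degree-`d` homogeneous component of `F[V]_G`
is nonzero; since the Hilbert ideal is homogeneous this is the largest `d` for
which some homogeneous polynomial of degree `d` is not in the Hilbert ideal. -/
noncomputable def topDeg (ρ : G →* (Matrix ι ι F)ˣ) : ℕ :=
  sSup {d : ℕ | ∃ f : MvPolynomial ι F, f.IsHomogeneous d ∧ f ∉ hilbertIdeal ρ}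

/-- The dimension of the coinvariant algebra `F[V]_G` as an `F`-vector space. -/
noncomputable def coinvDim (ρ : G →* (Matrix ι ι F)ˣ) : ℕ :=
  Module.finrank F (MvPolynomial ι F ⧸ hilbertIdeal ρ)

/-!
Restricting polynomial functions along the embedding `U → V` is a degree-preserving,
`G`-equivariant algebra map `F[V] → F[U]`, surjective even in each degree because the embedding
has a linear left inverse. It maps the Hilbert ideal of `V` into that of `U`, hence induces a
surjection `F[V]_G → F[U]_G` that preserves degrees, and both inequalities follow once `F[V]_G`
is finite-dimensional. That holds because every variable `x` satisfies `x ^ |G| ∈` Hilbert ideal: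
`x` is a root of the monic orbit polynomial `∏ g, (T - g • x)`, whose lower coefficients are
homogeneous invariants of positive degree.
-/

namespace MvPolynomial

section LinearSubst

variable {R σ τ υ : Type*} [CommSemiring R] [Fintype τ]

/-- `linearSubst A f` is the polynomial function `v ↦ f (A *ᵥ v)`. -/
noncomputable def linearSubst (A : Matrix σ τ R) : MvPolynomial σ R →ₐ[R] MvPolynomial τ R :=
  aeval fun s => ∑ t, A s t • X t

theorem linearSubst_X (A : Matrix σ τ R) (s : σ) :
    linearSubst A (X s) = ∑ t, A s t • X t :=
  aeval_X _ _

theorem linearSubst_mul [Fintype υ] (A : Matrix σ τ R) (B : Matrix τ υ R) :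
    linearSubst (A * B) = (linearSubst B).comp (linearSubst A) := by
  refine algHom_ext fun s => ?_
  simp only [AlgHom.comp_apply, linearSubst_X, map_sum, map_smul, Finset.smul_sum, smul_smul,
    Matrix.mul_apply, Finset.sum_smul]
  exact Finset.sum_comm

theorem linearSubst_one [Fintype σ] [DecidableEq σ] :
    linearSubst (1 : Matrix σ σ R) = AlgHom.id R _ := by
  refine algHom_ext fun s => ?_
  simp [linearSubst_X, Matrix.one_apply]

theorem linearSubst_mul_apply [Fintype υ] (A : Matrix σ τ R) (B : Matrix τ υ R)
    (f : MvPolynomial σ R) : linearSubst B (linearSubst A f) = linearSubst (A * B) f := by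
  rw [linearSubst_mul, AlgHom.comp_apply]

theorem IsHomogeneous.linearSubst {f : MvPolynomial σ R} {d : ℕ} (hf : f.IsHomogeneous d)
    (A : Matrix σ τ R) : (linearSubst A f).IsHomogeneous d := by
  have hX (s : σ) : (∑ t, A s t • X t : MvPolynomial τ R).IsHomogeneous 1 :=
    IsHomogeneous.sum _ _ _ fun t _ => by rw [smul_eq_C_mul]; exact isHomogeneous_C_mul_X _ t
  rw [← one_mul d]
  exact hf.aeval _ hX

theorem isHomogeneous_esymm [Fintype σ] (n : ℕ) : (esymm σ R n).IsHomogeneous n := by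
  refine IsHomogeneous.sum _ _ _ fun t ht => ?_
  simpa [(Finset.mem_powersetCard.mp ht).2] using
    IsHomogeneous.prod t X (fun _ => 1) fun i _ => isHomogeneous_X R i

theorem linearSubst_leftInverse [Fintype σ] [DecidableEq τ] {M : Matrix σ τ R}
    {N : Matrix τ σ R} (hNM : N * M = 1) :
    Function.LeftInverse (linearSubst M) (linearSubst N) := fun f => by
  rw [linearSubst_mul_apply, hNM, linearSubst_one, AlgHom.id_apply]

end LinearSubst

section DegreeBounds

variable {R σ : Type*} [CommSemiring R] {I : Ideal (MvPolynomial σ R)} {n : ℕ}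

theorem monomial_mem_of_X_pow_mem {m : σ →₀ ℕ} {s : σ} (hs : X s ^ n ∈ I) (hm : n ≤ m s)
    (c : R) : monomial m c ∈ I := by
  have hdvd : Finsupp.single s n ≤ m := Finsupp.single_le_iff.mpr hm
  rw [← tsub_add_cancel_of_le hdvd, ← mul_one c, ← monomial_mul, ← X_pow_eq_monomial]
  exact I.mul_mem_left _ hs

theorem mem_of_isHomogeneous_of_X_pow_mem [Fintype σ] (hI : ∀ s, X s ^ n ∈ I)
    {f : MvPolynomial σ R} {d : ℕ} (hf : f.IsHomogeneous d)
    (hd : Fintype.card σ * (n - 1) < d) : f ∈ I := by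
  rw [f.as_sum]
  refine I.sum_mem fun m hm => ?_
  obtain ⟨s, hs⟩ : ∃ s, n ≤ m s := by
    by_contra! hsmall
    have : d ≤ Fintype.card σ * (n - 1) := calc
      d = ∑ s, m s := by
        rw [← hf (mem_support_iff.mp hm), Finsupp.weight_apply]
        simp [Finsupp.sum_fintype]
      _ ≤ ∑ _s : σ, (n - 1) := Finset.sum_le_sum fun s _ => Nat.le_sub_one_of_lt (hsmall s)
      _ = Fintype.card σ * (n - 1) := by simp
    omega
  exact monomial_mem_of_X_pow_mem (hI s) hs _

def degreesNotIn (I : Ideal (MvPolynomial σ R)) : Set ℕ :=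
  {d | ∃ f : MvPolynomial σ R, f.IsHomogeneous d ∧ f ∉ I}

theorem bddAbove_degreesNotIn [Fintype σ] (hI : ∀ s, X s ^ n ∈ I) :
    BddAbove (degreesNotIn I) :=
  ⟨Fintype.card σ * (n - 1), fun _d ⟨_f, hf, hfI⟩ =>
    not_lt.mp fun hd => hfI (mem_of_isHomogeneous_of_X_pow_mem hI hf hd)⟩

theorem degreesNotIn_subset {τ : Type*} [Fintype σ] [Fintype τ] [DecidableEq τ]
    {J : Ideal (MvPolynomial τ R)} {M : Matrix σ τ R} {N : Matrix τ σ R} (hNM : N * M = 1)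
    (hle : I ≤ J.comap (linearSubst M)) : degreesNotIn J ⊆ degreesNotIn I :=
  fun _d ⟨f, hf, hfJ⟩ => ⟨linearSubst N f, hf.linearSubst N, fun hfI => hfJ <| by
    simpa only [Ideal.mem_comap, linearSubst_leftInverse hNM f] using hle hfI⟩

theorem finite_quotient_of_X_pow_mem {R : Type*} [CommRing R] [Finite σ]
    {I : Ideal (MvPolynomial σ R)} (hI : ∀ s, X s ^ n ∈ I) :
    Module.Finite R (MvPolynomial σ R ⧸ I) := by
  let π := Ideal.Quotient.mkₐ R I
  have hgen : Algebra.adjoin R (π '' Set.range X) = ⊤ := by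
    rw [← AlgHom.map_adjoin, adjoin_range_X, Algebra.map_top,
      (AlgHom.range_eq_top π).mpr (Ideal.Quotient.mkₐ_surjective R I)]
  have hint : ∀ y ∈ π '' Set.range X, IsIntegral R y := by
    rintro _ ⟨_, ⟨s, rfl⟩, rfl⟩
    refine IsIntegral.of_pow n.succ_pos ?_
    rw [← map_pow, Ideal.Quotient.mkₐ_eq_mk, Ideal.Quotient.eq_zero_iff_mem.mpr
      (by rw [pow_succ]; exact I.mul_mem_right _ (hI s))]
    exact isIntegral_zero
  have := fg_adjoin_of_finite ((Set.finite_range X).image π) hint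
  rw [hgen, Algebra.top_toSubmodule] at this
  exact ⟨this⟩

end DegreeBounds

end MvPolynomial

theorem Polynomial.Monic.pow_natDegree_mem_of_isRoot {R : Type*} [CommRing R] {I : Ideal R}
    {p : Polynomial R} (hp : p.Monic) {x : R} (hx : p.IsRoot x)
    (hI : ∀ i < p.natDegree, p.coeff i ∈ I) : x ^ p.natDegree ∈ I := by
  have hsum := hx.eq_zero
  rw [eval_eq_sum_range, Finset.sum_range_succ, hp.coeff_natDegree, one_mul] at hsum
  rw [eq_neg_of_add_eq_zero_right hsum]
  exact neg_mem (I.sum_mem fun i hi => I.mul_mem_right _ (hI i (Finset.mem_range.mp hi)))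

theorem polyAct_eq_linearSubst (ρ : G →* (Matrix ι ι F)ˣ) (g : G) :
    polyAct ρ g = linearSubst (ρ g⁻¹ : Matrix ι ι F) :=
  rfl

theorem polyAct_one (ρ : G →* (Matrix ι ι F)ˣ) (f : MvPolynomial ι F) : polyAct ρ 1 f = f := by
  rw [polyAct_eq_linearSubst, inv_one, map_one, Units.val_one, linearSubst_one, AlgHom.id_apply]

theorem polyAct_mul (ρ : G →* (Matrix ι ι F)ˣ) (g h : G) (f : MvPolynomial ι F) :
    polyAct ρ g (polyAct ρ h f) = polyAct ρ (g * h) f := by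
  rw [polyAct_eq_linearSubst, polyAct_eq_linearSubst, polyAct_eq_linearSubst,
    linearSubst_mul_apply, mul_inv_rev, map_mul, Units.val_mul]

section OrbitPoly

variable [Fintype G] (ρ : G →* (Matrix ι ι F)ˣ) (x : MvPolynomial ι F)

noncomputable def orbitPoly : Polynomial (MvPolynomial ι F) :=
  ∏ g : G, (Polynomial.X - Polynomial.C (polyAct ρ g x))

theorem monic_orbitPoly : (orbitPoly ρ x).Monic :=
  Polynomial.monic_prod_X_sub_C _ _

theorem natDegree_orbitPoly : (orbitPoly ρ x).natDegree = Fintype.card G := by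
  rw [orbitPoly, Polynomial.natDegree_finsetProd_X_sub_C_eq_card, Finset.card_univ]

theorem isRoot_orbitPoly : (orbitPoly ρ x).IsRoot x := by
  rw [orbitPoly, Polynomial.IsRoot, Polynomial.eval_prod]
  exact Finset.prod_eq_zero (Finset.mem_univ 1) (by simp [polyAct_one])

theorem orbitPoly_map_polyAct (g : G) :
    (orbitPoly ρ x).map (linearSubst (ρ g⁻¹ : Matrix ι ι F) : MvPolynomial ι F →+* _)
      = orbitPoly ρ x := by
  simp only [orbitPoly, Polynomial.map_prod, Polynomial.map_sub, Polynomial.map_X,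
    Polynomial.map_C, RingHom.coe_coe, ← polyAct_eq_linearSubst, polyAct_mul]
  exact Fintype.prod_equiv (Equiv.mulLeft g) _ _ fun _ => rfl

theorem isInv_coeff_orbitPoly (i : ℕ) : IsInv ρ ((orbitPoly ρ x).coeff i) := fun g => by
  conv_rhs => rw [← orbitPoly_map_polyAct ρ x g]
  rw [Polynomial.coeff_map]
  rfl

theorem isHomogeneous_coeff_orbitPoly {e : ℕ} (hx : x.IsHomogeneous e) {i : ℕ}
    (hi : i ≤ Fintype.card G) :
    ((orbitPoly ρ x).coeff i).IsHomogeneous (e * (Fintype.card G - i)) := by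
  have hvieta := Multiset.prod_X_sub_C_coeff (Finset.univ.val.map fun g : G => polyAct ρ g x)
    (k := i) (by simpa using hi)
  rw [Multiset.map_map, ← Finset.prod_eq_multiset_prod, Multiset.card_map,
    Finset.card_val, Finset.card_univ, ← aeval_esymm_eq_multiset_esymm G F, Function.comp_def]
    at hvieta
  rw [orbitPoly, hvieta]
  have hsign : ((-1 : MvPolynomial ι F) ^ (Fintype.card G - i)).IsHomogeneous 0 := by
    simpa using (isHomogeneous_C ι (-1 : F)).pow (Fintype.card G - i)
  rw [← zero_add (e * _)]
  exact hsign.mul ((isHomogeneous_esymm _).aeval _ fun g => hx.linearSubst _)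

end OrbitPoly

theorem pow_card_mem_hilbertIdeal [Fintype G] (ρ : G →* (Matrix ι ι F)ˣ)
    {x : MvPolynomial ι F} {e : ℕ} (hx : x.IsHomogeneous e) (he : 0 < e) :
    x ^ Fintype.card G ∈ hilbertIdeal ρ := by
  rw [← natDegree_orbitPoly ρ x]
  refine (monic_orbitPoly ρ x).pow_natDegree_mem_of_isRoot (isRoot_orbitPoly ρ x) fun i hi => ?_
  rw [natDegree_orbitPoly] at hi
  exact Ideal.subset_span ⟨⟨_, Nat.mul_pos he (Nat.sub_pos_of_lt hi),
    isHomogeneous_coeff_orbitPoly ρ x hx hi.le⟩, isInv_coeff_orbitPoly ρ x i⟩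

section Restriction

variable {κ : Type*} [Fintype κ] [DecidableEq κ] {ρU : G →* (Matrix ι ι F)ˣ}
  {ρV : G →* (Matrix κ κ F)ˣ} {M : Matrix κ ι F}

theorem linearSubst_polyAct (hM : ∀ g, M * (ρU g : Matrix ι ι F) = (ρV g : Matrix κ κ F) * M)
    (g : G) (f : MvPolynomial κ F) :
    linearSubst M (polyAct ρV g f) = polyAct ρU g (linearSubst M f) := by
  rw [polyAct_eq_linearSubst, polyAct_eq_linearSubst, linearSubst_mul_apply,
    linearSubst_mul_apply, hM]

theorem hilbertIdeal_le_comap_linearSubst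
    (hM : ∀ g, M * (ρU g : Matrix ι ι F) = (ρV g : Matrix κ κ F) * M) :
    hilbertIdeal ρV ≤ (hilbertIdeal ρU).comap (linearSubst M) := by
  refine Ideal.span_le.mpr fun f ⟨⟨d, hd, hf⟩, hfinv⟩ => Ideal.subset_span ?_
  exact ⟨⟨d, hd, hf.linearSubst M⟩, fun g => by rw [← linearSubst_polyAct hM, hfinv g]⟩

end Restriction

/-- If `U` is a `G`-submodule of `V` (expressed by a `G`-equivariant
linear embedding `φ : U → V`), then `topdeg F[U]_G ≤ topdeg F[V]_G` and
`dim_F F[U]_G ≤ dim_F F[V]_G`. -/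
theorem topDeg_submodule_le [Fintype G] {κ : Type*} [Fintype κ] [DecidableEq κ]
    (ρU : G →* (Matrix ι ι F)ˣ) (ρV : G →* (Matrix κ κ F)ˣ)
    (φ : (ι → F) →ₗ[F] (κ → F)) (hinj : Function.Injective φ)
    (hequiv : ∀ (σ : G) (v : ι → F),
      φ ((ρU σ : Matrix ι ι F).mulVec v) = (ρV σ : Matrix κ κ F).mulVec (φ v)) :
    topDeg ρU ≤ topDeg ρV ∧ coinvDim ρU ≤ coinvDim ρV := by
  set M := LinearMap.toMatrix' φ
  have hM : ∀ g, M * (ρU g : Matrix ι ι F) = (ρV g : Matrix κ κ F) * M := fun g =>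
    Matrix.toLin'.injective <| LinearMap.ext fun v => by simp [M, hequiv]
  obtain ⟨ψ, hψ⟩ := φ.exists_leftInverse_of_injective (LinearMap.ker_eq_bot.mpr hinj)
  have hNM : LinearMap.toMatrix' ψ * M = 1 := by
    rw [← LinearMap.toMatrix'_comp, hψ, LinearMap.toMatrix'_id]
  have hle := hilbertIdeal_le_comap_linearSubst hM
  have hX (k : κ) : X k ^ Fintype.card G ∈ hilbertIdeal ρV :=
    pow_card_mem_hilbertIdeal ρV (isHomogeneous_X F k) one_pos
  refine ⟨csSup_le_csSup' (bddAbove_degreesNotIn hX) (degreesNotIn_subset hNM hle), ?_⟩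
  have : Module.Finite F (MvPolynomial κ F ⧸ hilbertIdeal ρV) := finite_quotient_of_X_pow_mem hX
  exact LinearMap.finrank_le_finrank_of_surjective (f := (Ideal.quotientMapₐ _ _ hle).toLinearMap)
    (Ideal.quotientMap_surjective (H := hle) (linearSubst_leftInverse hNM).surjective)
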